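/- The interchange law holds in F(X,h): for 2-cells α : M1 ⟶ M2, β : M2 ⟶ M3 : A → B and γ : N1 ⟶ N2, θ : N2 ⟶ N3 : B → C, one has (γ ; θ) ∘ (α ; β) = (γ ∘ α) ; (θ ∘ β). -/
import Mathlib


/-! Syntax of the 2-λ-calculus over a 2-signature, following
"Cartesian closed 2-categories and permutation equivalence in
higher-order rewriting". -/

/-- Simple types over a set `S` of sorts: `A ::= s | 1 | A × B | B^A`
(`arr A B` denotes `B^A`). -/
inductive Ty (S : Type) : Type
  | base (s : S)
  | unit
  | prod (A B : Ty S)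
  | arr (A B : Ty S)

/-- A 1-signature over a fixed set `S` of sorts: operations with arities. -/
structure Sig1 (S : Type) : Type 1 where
  Op : Type
  opCtx : Op → List (Ty S)
  opTy : Op → Ty S

variable {S : Type}

/-- Raw λ-terms (de Bruijn indices) over a 1-signature.  Constant
application `const c args` applies an operation to a tuple of terms
(indices `≥ arity` are ignored by the typing rules). -/
inductive Tm (Sg : Sig1 S) : Type
  | var (n : ℕ)
  | unit
  | pair (M N : Tm Sg)
  | fst (M : Tm Sg)
  | snd (M : Tm Sg)
  | lam (A : Ty S) (M : Tm Sg)
  | app (M N : Tm Sg)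
  | const (c : Sg.Op) (args : ℕ → Tm Sg)

namespace Tm

variable {Sg : Sig1 S}

/-- Lift a renaming under a binder. -/
def liftRen (f : ℕ → ℕ) : ℕ → ℕ
  | 0 => 0
  | n + 1 => f n + 1

/-- Renaming of variables. -/
def ren (f : ℕ → ℕ) : Tm Sg → Tm Sg
  | var n => var (f n)
  | unit => unit
  | pair M N => pair (M.ren f) (N.ren f)
  | fst M => fst (M.ren f)
  | snd M => snd (M.ren f)
  | lam A M => lam A (M.ren (liftRen f))
  | app M N => app (M.ren f) (N.ren f)
  | const c a => const c (fun i => (a i).ren f)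

/-- Lift a simultaneous substitution under a binder. -/
def liftSub (σ : ℕ → Tm Sg) : ℕ → Tm Sg
  | 0 => var 0
  | n + 1 => (σ n).ren Nat.succ

/-- Simultaneous substitution. -/
def sub (σ : ℕ → Tm Sg) : Tm Sg → Tm Sg
  | var n => σ n
  | unit => unit
  | pair M N => pair (M.sub σ) (N.sub σ)
  | fst M => fst (M.sub σ)
  | snd M => snd (M.sub σ)
  | lam A M => lam A (M.sub (liftSub σ))
  | app M N => app (M.sub σ) (N.sub σ)
  | const c a => const c (fun i => (a i).sub σ)

/-- Extension of a substitution by a term (for substituting a single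
variable). -/
def cons (M : Tm Sg) (σ : ℕ → Tm Sg) : ℕ → Tm Sg
  | 0 => M
  | n + 1 => σ n

end Tm

/-- Typing judgement `Γ ⊢ M : A` for λ-terms. -/
inductive HasTy (Sg : Sig1 S) : List (Ty S) → Tm Sg → Ty S → Prop
  | var {Γ : List (Ty S)} {n : ℕ} (h : n < Γ.length) :
      HasTy Sg Γ (.var n) (Γ.get ⟨n, h⟩)
  | unit {Γ} : HasTy Sg Γ .unit .unit
  | pair {Γ M N A B} : HasTy Sg Γ M A → HasTy Sg Γ N B →
      HasTy Sg Γ (.pair M N) (.prod A B)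
  | fst {Γ M A B} : HasTy Sg Γ M (.prod A B) → HasTy Sg Γ (.fst M) A
  | snd {Γ M A B} : HasTy Sg Γ M (.prod A B) → HasTy Sg Γ (.snd M) B
  | lam {Γ M A B} : HasTy Sg (A :: Γ) M B → HasTy Sg Γ (.lam A M) (.arr A B)
  | app {Γ M N A B} : HasTy Sg Γ M (.arr A B) → HasTy Sg Γ N A →
      HasTy Sg Γ (.app M N) B
  | const {Γ} {c : Sg.Op} {args : ℕ → Tm Sg}
      (h : ∀ i (hi : i < (Sg.opCtx c).length),
        HasTy Sg Γ (args i) ((Sg.opCtx c).get ⟨i, hi⟩)) :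
      HasTy Sg Γ (.const c args) (Sg.opTy c)

/-- βη-equivalence of well-typed λ-terms. -/
inductive Beq (Sg : Sig1 S) : List (Ty S) → Tm Sg → Tm Sg → Ty S → Prop
  | refl {Γ M A} : HasTy Sg Γ M A → Beq Sg Γ M M A
  | symm {Γ M N A} : Beq Sg Γ M N A → Beq Sg Γ N M A
  | trans {Γ M N P A} : Beq Sg Γ M N A → Beq Sg Γ N P A → Beq Sg Γ M P A
  | pairCong {Γ M M' N N' A B} : Beq Sg Γ M M' A → Beq Sg Γ N N' B →
      Beq Sg Γ (.pair M N) (.pair M' N') (.prod A B)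
  | fstCong {Γ M M' A B} : Beq Sg Γ M M' (.prod A B) →
      Beq Sg Γ (.fst M) (.fst M') A
  | sndCong {Γ M M' A B} : Beq Sg Γ M M' (.prod A B) →
      Beq Sg Γ (.snd M) (.snd M') B
  | lamCong {Γ M M' A B} : Beq Sg (A :: Γ) M M' B →
      Beq Sg Γ (.lam A M) (.lam A M') (.arr A B)
  | appCong {Γ M M' N N' A B} : Beq Sg Γ M M' (.arr A B) → Beq Sg Γ N N' A →
      Beq Sg Γ (.app M N) (.app M' N') B
  | constCong {Γ} {c : Sg.Op} {args args' : ℕ → Tm Sg}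
      (h : ∀ i (hi : i < (Sg.opCtx c).length),
        Beq Sg Γ (args i) (args' i) ((Sg.opCtx c).get ⟨i, hi⟩)) :
      Beq Sg Γ (.const c args) (.const c args') (Sg.opTy c)
  | beta {Γ M N A B} : HasTy Sg (A :: Γ) M B → HasTy Sg Γ N A →
      Beq Sg Γ (.app (.lam A M) N) (M.sub (Tm.cons N .var)) B
  | eta {Γ M A B} : HasTy Sg Γ M (.arr A B) →
      Beq Sg Γ M (.lam A (.app (M.ren Nat.succ) (.var 0))) (.arr A B)
  | prodBeta1 {Γ M N A B} : HasTy Sg Γ M A → HasTy Sg Γ N B →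
      Beq Sg Γ (.fst (.pair M N)) M A
  | prodBeta2 {Γ M N A B} : HasTy Sg Γ M A → HasTy Sg Γ N B →
      Beq Sg Γ (.snd (.pair M N)) N B
  | prodEta {Γ M A B} : HasTy Sg Γ M (.prod A B) →
      Beq Sg Γ M (.pair (.fst M) (.snd M)) (.prod A B)
  | unitEta {Γ M} : HasTy Sg Γ M .unit → Beq Sg Γ M .unit .unit

/-- A 2-signature: a 1-signature together with a set of reduction rules
between parallel terms. -/
structure Sig2 (S : Type) : Type 1 where
  sig : Sig1 S
  Rule : Type
  ruleCtx : Rule → List (Ty S)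
  ruleTy : Rule → Ty S
  lhs : Rule → Tm sig
  rhs : Rule → Tm sig

/-- Raw reduction terms ("proof terms") over a 1-signature `Sg` and a set `R`
of reduction-rule names.  `vcomp P M Q` is the vertical composite
`P ;_M Q`. -/
inductive Rd (Sg : Sig1 S) (R : Type) : Type
  | var (n : ℕ)
  | unit
  | pair (P Q : Rd Sg R)
  | fst (P : Rd Sg R)
  | snd (P : Rd Sg R)
  | lam (A : Ty S) (P : Rd Sg R)
  | app (P Q : Rd Sg R)
  | const (c : Sg.Op) (args : ℕ → Rd Sg R)
  | rule (r : R) (args : ℕ → Rd Sg R)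
  | vcomp (P : Rd Sg R) (M : Tm Sg) (Q : Rd Sg R)

namespace Rd

variable {Sg : Sig1 S} {R R' : Type}

/-- Every term is an identity reduction on itself. -/
def toRd : Tm Sg → Rd Sg R
  | .var n => var n
  | .unit => unit
  | .pair M N => pair (toRd M) (toRd N)
  | .fst M => fst (toRd M)
  | .snd M => snd (toRd M)
  | .lam A M => lam A (toRd M)
  | .app M N => app (toRd M) (toRd N)
  | .const c a => const c (fun i => toRd (a i))

/-- Renaming of variables in reductions. -/
def ren (f : ℕ → ℕ) : Rd Sg R → Rd Sg R
  | var n => var (f n)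
  | unit => unit
  | pair P Q => pair (P.ren f) (Q.ren f)
  | fst P => fst (P.ren f)
  | snd P => snd (P.ren f)
  | lam A P => lam A (P.ren (Tm.liftRen f))
  | app P Q => app (P.ren f) (Q.ren f)
  | const c a => const c (fun i => (a i).ren f)
  | rule r a => rule r (fun i => (a i).ren f)
  | vcomp P M Q => vcomp (P.ren f) (M.ren f) (Q.ren f)

/-- Relabelling of rule names in a reduction. -/
def mapRule (g : R → R') : Rd Sg R → Rd Sg R'
  | var n => var n
  | unit => unit
  | pair P Q => pair (P.mapRule g) (Q.mapRule g)
  | fst P => fst (P.mapRule g)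
  | snd P => snd (P.mapRule g)
  | lam A P => lam A (P.mapRule g)
  | app P Q => app (P.mapRule g) (Q.mapRule g)
  | const c a => const c (fun i => (a i).mapRule g)
  | rule r a => rule (g r) (fun i => (a i).mapRule g)
  | vcomp P M Q => vcomp (P.mapRule g) M (Q.mapRule g)

/-- Lift a tuple of reductions under a binder. -/
def liftRd (Q : ℕ → Rd Sg R) : ℕ → Rd Sg R
  | 0 => var 0
  | n + 1 => (Q n).ren Nat.succ

/-- Extension of a tuple of reductions by a reduction. -/
def consRd (P : Rd Sg R) (τ : ℕ → Rd Sg R) : ℕ → Rd Sg R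
  | 0 => P
  | n + 1 => τ n

end Rd

/-- Left whiskering `M[Q]` of a term `M` by a tuple of reductions `Q`. -/
def lw {Sg : Sig1 S} {R : Type} (Q : ℕ → Rd Sg R) : Tm Sg → Rd Sg R
  | .var n => Q n
  | .unit => .unit
  | .pair M N => .pair (lw Q M) (lw Q N)
  | .fst M => .fst (lw Q M)
  | .snd M => .snd (lw Q M)
  | .lam A M => .lam A (lw (Rd.liftRd Q) M)
  | .app M N => .app (lw Q M) (lw Q N)
  | .const c a => .const c (fun i => lw Q (a i))

/-- Right whiskering `P[N]` of a reduction `P` by a tuple of terms `N`. -/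
def rw {Sg : Sig1 S} {R : Type} (N : ℕ → Tm Sg) : Rd Sg R → Rd Sg R
  | .var n => Rd.toRd (N n)
  | .unit => .unit
  | .pair P Q => .pair (rw N P) (rw N Q)
  | .fst P => .fst (rw N P)
  | .snd P => .snd (rw N P)
  | .lam A P => .lam A (rw (Tm.liftSub N) P)
  | .app P Q => .app (rw N P) (rw N Q)
  | .const c a => .const c (fun i => rw N (a i))
  | .rule r a => .rule r (fun i => rw N (a i))
  | .vcomp P M Q => .vcomp (rw N P) (M.sub N) (rw N Q)

/-- Substitution of a tuple of reductions `Q : N ⟶ N'` into a reduction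
`P : M ⟶ M'`, defined as `P[N] ;_{M'[N]} M'[Q]`. -/
def rdSub {Sg : Sig1 S} {R : Type} (P : Rd Sg R) (N : ℕ → Tm Sg) (M' : Tm Sg)
    (Q : ℕ → Rd Sg R) : Rd Sg R :=
  .vcomp (rw N P) (M'.sub N) (lw Q M')

/-- The typing judgement `Γ ⊢ P : M ⟶ N : A` for reductions. -/
inductive RdJ (X : Sig2 S) : List (Ty S) → Rd X.sig X.Rule → Tm X.sig → Tm X.sig → Ty S → Prop
  | rule {Γ} {r : X.Rule} {args : ℕ → Rd X.sig X.Rule} {Ms Ns : ℕ → Tm X.sig}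
      (h : ∀ i (hi : i < (X.ruleCtx r).length),
        RdJ X Γ (args i) (Ms i) (Ns i) ((X.ruleCtx r).get ⟨i, hi⟩)) :
      RdJ X Γ (.rule r args) ((X.lhs r).sub Ms) ((X.rhs r).sub Ns) (X.ruleTy r)
  | vcomp {Γ P Q M₁ M₂ M₃ A} : RdJ X Γ P M₁ M₂ A → RdJ X Γ Q M₂ M₃ A →
      RdJ X Γ (.vcomp P M₂ Q) M₁ M₃ A
  | var {Γ : List (Ty S)} {n : ℕ} (h : n < Γ.length) :
      RdJ X Γ (.var n) (.var n) (.var n) (Γ.get ⟨n, h⟩)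
  | unit {Γ} : RdJ X Γ .unit .unit .unit .unit
  | const {Γ} {c : X.sig.Op} {args : ℕ → Rd X.sig X.Rule} {Ms Ns : ℕ → Tm X.sig}
      (h : ∀ i (hi : i < (X.sig.opCtx c).length),
        RdJ X Γ (args i) (Ms i) (Ns i) ((X.sig.opCtx c).get ⟨i, hi⟩)) :
      RdJ X Γ (.const c args) (.const c Ms) (.const c Ns) (X.sig.opTy c)
  | lam {Γ P M N A B} : RdJ X (A :: Γ) P M N B →
      RdJ X Γ (.lam A P) (.lam A M) (.lam A N) (.arr A B)
  | app {Γ P Q M M' N N' A B} : RdJ X Γ P M M' (.arr A B) → RdJ X Γ Q N N' A →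
      RdJ X Γ (.app P Q) (.app M N) (.app M' N') B
  | pair {Γ P Q M M' N N' A B} : RdJ X Γ P M M' A → RdJ X Γ Q N N' B →
      RdJ X Γ (.pair P Q) (.pair M N) (.pair M' N') (.prod A B)
  | fst {Γ P M N A B} : RdJ X Γ P M N (.prod A B) →
      RdJ X Γ (.fst P) (.fst M) (.fst N) A
  | snd {Γ P M N A B} : RdJ X Γ P M N (.prod A B) →
      RdJ X Γ (.snd P) (.snd M) (.snd N) B
  | conv {Γ P M N M' N' A} : RdJ X Γ P M N A → Beq X.sig Γ M M' A →
      Beq X.sig Γ N N' A → RdJ X Γ P M' N' A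
/-- Permutation equivalence `Γ ⊢ P ≡ Q : M ⟶ N : A` on reductions:
the congruence generated by the category laws for vertical composition,
β/η-rules at the level of reductions, and the lifting rules. -/
inductive PEq (X : Sig2 S) : List (Ty S) → Rd X.sig X.Rule → Rd X.sig X.Rule → Tm X.sig → Tm X.sig → Ty S → Prop
  -- congruence rules
  | refl {Γ P M N A} : RdJ X Γ P M N A → PEq X Γ P P M N A
  | symm {Γ P Q M N A} : PEq X Γ P Q M N A → PEq X Γ Q P M N A
  | trans {Γ P Q R₀ M N A} : PEq X Γ P Q M N A → PEq X Γ Q R₀ M N A →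
      PEq X Γ P R₀ M N A
  | vcompCong {Γ P P' Q Q' M₁ M₂ M₃ A} : PEq X Γ P P' M₁ M₂ A →
      PEq X Γ Q Q' M₂ M₃ A →
      PEq X Γ (.vcomp P M₂ Q) (.vcomp P' M₂ Q') M₁ M₃ A
  | ruleCong {Γ} {r : X.Rule} {P Q : ℕ → Rd X.sig X.Rule} {Ms Ns : ℕ → Tm X.sig}
      (h : ∀ i (hi : i < (X.ruleCtx r).length),
        PEq X Γ (P i) (Q i) (Ms i) (Ns i) ((X.ruleCtx r).get ⟨i, hi⟩)) :
      PEq X Γ (.rule r P) (.rule r Q) ((X.lhs r).sub Ms) ((X.rhs r).sub Ns) (X.ruleTy r)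
  | constCong {Γ} {c : X.sig.Op} {P Q : ℕ → Rd X.sig X.Rule} {Ms Ns : ℕ → Tm X.sig}
      (h : ∀ i (hi : i < (X.sig.opCtx c).length),
        PEq X Γ (P i) (Q i) (Ms i) (Ns i) ((X.sig.opCtx c).get ⟨i, hi⟩)) :
      PEq X Γ (.const c P) (.const c Q) (.const c Ms) (.const c Ns) (X.sig.opTy c)
  | lamCong {Γ P Q M N A B} : PEq X (A :: Γ) P Q M N B →
      PEq X Γ (.lam A P) (.lam A Q) (.lam A M) (.lam A N) (.arr A B)
  | appCong {Γ P P' Q Q' M M' N N' A B} : PEq X Γ P P' M M' (.arr A B) →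
      PEq X Γ Q Q' N N' A →
      PEq X Γ (.app P Q) (.app P' Q') (.app M N) (.app M' N') B
  | pairCong {Γ P P' Q Q' M M' N N' A B} : PEq X Γ P P' M M' A →
      PEq X Γ Q Q' N N' B →
      PEq X Γ (.pair P Q) (.pair P' Q') (.pair M N) (.pair M' N') (.prod A B)
  | fstCong {Γ P Q M N A B} : PEq X Γ P Q M N (.prod A B) →
      PEq X Γ (.fst P) (.fst Q) (.fst M) (.fst N) A
  | sndCong {Γ P Q M N A B} : PEq X Γ P Q M N (.prod A B) →
      PEq X Γ (.snd P) (.snd Q) (.snd M) (.snd N) B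
  -- category rules
  | assoc {Γ P₁ P₂ P₃ M₁ M₂ M₃ M₄ A} : RdJ X Γ P₁ M₁ M₂ A → RdJ X Γ P₂ M₂ M₃ A →
      RdJ X Γ P₃ M₃ M₄ A →
      PEq X Γ (.vcomp P₁ M₂ (.vcomp P₂ M₃ P₃)) (.vcomp (.vcomp P₁ M₂ P₂) M₃ P₃) M₁ M₄ A
  | unitR {Γ P M N A} : RdJ X Γ P M N A →
      PEq X Γ (.vcomp P N (Rd.toRd N)) P M N A
  | unitL {Γ P M N A} : RdJ X Γ P M N A →
      PEq X Γ (.vcomp (Rd.toRd M) M P) P M N A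
  -- beta and eta rules
  | beta {Γ P Q M M' N N' A B} : RdJ X (A :: Γ) P M M' B → RdJ X Γ Q N N' A →
      PEq X Γ (.app (.lam A P) Q)
        (rdSub P (Tm.cons N Tm.var) M' (Rd.consRd Q (fun n => Rd.var n)))
        (.app (.lam A M) N) (M'.sub (Tm.cons N' Tm.var)) B
  | eta {Γ P M N A B} : RdJ X Γ P M N (.arr A B) →
      PEq X Γ P (.lam A (.app (P.ren Nat.succ) (.var 0))) M N (.arr A B)
  | fstPair {Γ P Q M₁ M₂ N₁ N₂ A B} : RdJ X Γ P M₁ M₂ A → RdJ X Γ Q N₁ N₂ B →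
      PEq X Γ (.fst (.pair P Q)) P (.fst (.pair M₁ N₁)) M₂ A
  | sndPair {Γ P Q M₁ M₂ N₁ N₂ A B} : RdJ X Γ P M₁ M₂ A → RdJ X Γ Q N₁ N₂ B →
      PEq X Γ (.snd (.pair P Q)) Q (.snd (.pair M₁ N₁)) N₂ B
  | pairEta {Γ P M₁ M₂ N₁ N₂ A B} : RdJ X Γ P (.pair M₁ N₁) (.pair M₂ N₂) (.prod A B) →
      PEq X Γ P (.pair (.fst P) (.snd P)) (.pair M₁ N₁) (.pair M₂ N₂) (.prod A B)
  | unitEta {Γ P M N} : RdJ X Γ P M N .unit → PEq X Γ P .unit M N .unit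
  -- lifting rules
  | ruleLift1 {Δ} {r : X.Rule} {P Q : ℕ → Rd X.sig X.Rule} {N₁ N₂ N₃ : ℕ → Tm X.sig}
      (hP : ∀ i (hi : i < (X.ruleCtx r).length),
        RdJ X Δ (P i) (N₁ i) (N₂ i) ((X.ruleCtx r).get ⟨i, hi⟩))
      (hQ : ∀ i (hi : i < (X.ruleCtx r).length),
        RdJ X Δ (Q i) (N₂ i) (N₃ i) ((X.ruleCtx r).get ⟨i, hi⟩)) :
      PEq X Δ (.rule r (fun i => .vcomp (P i) (N₂ i) (Q i)))
        (.vcomp (lw P (X.lhs r)) ((X.lhs r).sub N₂) (.rule r Q))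
        ((X.lhs r).sub N₁) ((X.rhs r).sub N₃) (X.ruleTy r)
  | ruleLift2 {Δ} {r : X.Rule} {P Q : ℕ → Rd X.sig X.Rule} {N₁ N₂ N₃ : ℕ → Tm X.sig}
      (hP : ∀ i (hi : i < (X.ruleCtx r).length),
        RdJ X Δ (P i) (N₁ i) (N₂ i) ((X.ruleCtx r).get ⟨i, hi⟩))
      (hQ : ∀ i (hi : i < (X.ruleCtx r).length),
        RdJ X Δ (Q i) (N₂ i) (N₃ i) ((X.ruleCtx r).get ⟨i, hi⟩)) :
      PEq X Δ (.rule r (fun i => .vcomp (P i) (N₂ i) (Q i)))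
        (.vcomp (.rule r P) ((X.rhs r).sub N₂) (lw Q (X.rhs r)))
        ((X.lhs r).sub N₁) ((X.rhs r).sub N₃) (X.ruleTy r)
  | constLift {Γ} {c : X.sig.Op} {P Q : ℕ → Rd X.sig X.Rule} {M₁ M₂ M₃ : ℕ → Tm X.sig}
      (hP : ∀ i (hi : i < (X.sig.opCtx c).length),
        RdJ X Γ (P i) (M₁ i) (M₂ i) ((X.sig.opCtx c).get ⟨i, hi⟩))
      (hQ : ∀ i (hi : i < (X.sig.opCtx c).length),
        RdJ X Γ (Q i) (M₂ i) (M₃ i) ((X.sig.opCtx c).get ⟨i, hi⟩)) :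
      PEq X Γ (.const c (fun i => .vcomp (P i) (M₂ i) (Q i)))
        (.vcomp (.const c P) (.const c M₂) (.const c Q))
        (.const c M₁) (.const c M₃) (X.sig.opTy c)
  | lamLift {Γ P Q M₁ M₂ M₃ A B} : RdJ X (A :: Γ) P M₁ M₂ B →
      RdJ X (A :: Γ) Q M₂ M₃ B →
      PEq X Γ (.lam A (.vcomp P M₂ Q))
        (.vcomp (.lam A P) (.lam A M₂) (.lam A Q))
        (.lam A M₁) (.lam A M₃) (.arr A B)
  | appLift {Γ P P' Q Q' M₁ M₂ M₃ N₁ N₂ N₃ A B} :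
      RdJ X Γ P M₁ M₂ (.arr A B) → RdJ X Γ P' M₂ M₃ (.arr A B) →
      RdJ X Γ Q N₁ N₂ A → RdJ X Γ Q' N₂ N₃ A →
      PEq X Γ (.app (.vcomp P M₂ P') (.vcomp Q N₂ Q'))
        (.vcomp (.app P Q) (.app M₂ N₂) (.app P' Q'))
        (.app M₁ N₁) (.app M₃ N₃) B
  | pairLift {Γ P P' Q Q' M₁ M₂ M₃ N₁ N₂ N₃ A B} :
      RdJ X Γ P M₁ M₂ A → RdJ X Γ P' M₂ M₃ A →
      RdJ X Γ Q N₁ N₂ B → RdJ X Γ Q' N₂ N₃ B →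
      PEq X Γ (.pair (.vcomp P M₂ P') (.vcomp Q N₂ Q'))
        (.vcomp (.pair P Q) (.pair M₂ N₂) (.pair P' Q'))
        (.pair M₁ N₁) (.pair M₃ N₃) (.prod A B)
  | fstLift {Γ P Q M₁ M₂ M₃ A B} : RdJ X Γ P M₁ M₂ (.prod A B) →
      RdJ X Γ Q M₂ M₃ (.prod A B) →
      PEq X Γ (.fst (.vcomp P M₂ Q)) (.vcomp (.fst P) (.fst M₂) (.fst Q))
        (.fst M₁) (.fst M₃) A
  | sndLift {Γ P Q M₁ M₂ M₃ A B} : RdJ X Γ P M₁ M₂ (.prod A B) →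
      RdJ X Γ Q M₂ M₃ (.prod A B) →
      PEq X Γ (.snd (.vcomp P M₂ Q)) (.vcomp (.snd P) (.snd M₂) (.snd Q))
        (.snd M₁) (.snd M₃) B
  -- endpoints are βη-classes
  | conv {Γ P Q M N M' N' A} : PEq X Γ P Q M N A → Beq X.sig Γ M M' A →
      Beq X.sig Γ N N' A → PEq X Γ P Q M' N' A
/-- The rules of the 2-signature `L X`: reductions over `X` together with
their boundary (which the paper takes modulo permutation equivalence). -/
structure LRule (X : Sig2 S) : Type where
  ctx : List (Ty S)
  red : Rd X.sig X.Rule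
  src : Tm X.sig
  tgt : Tm X.sig
  ty : Ty S

/-- The 2-signature `L X`: same sorts and operations as `X`, and with
reduction rules the reductions over `X`. -/
def LSig (X : Sig2 S) : Sig2 S where
  sig := X.sig
  Rule := LRule X
  ruleCtx := LRule.ctx
  ruleTy := LRule.ty
  lhs := LRule.src
  rhs := LRule.tgt

/-- Source endpoint of a raw reduction. -/
def srcRd (X : Sig2 S) : Rd X.sig X.Rule → Tm X.sig
  | .var n => .var n
  | .unit => .unit
  | .pair P Q => .pair (srcRd X P) (srcRd X Q)
  | .fst P => .fst (srcRd X P)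
  | .snd P => .snd (srcRd X P)
  | .lam A P => .lam A (srcRd X P)
  | .app P Q => .app (srcRd X P) (srcRd X Q)
  | .const c a => .const c (fun i => srcRd X (a i))
  | .rule r a => (X.lhs r).sub (fun i => srcRd X (a i))
  | .vcomp P _ _ => srcRd X P

/-- Target endpoint of a raw reduction. -/
def tgtRd (X : Sig2 S) : Rd X.sig X.Rule → Tm X.sig
  | .var n => .var n
  | .unit => .unit
  | .pair P Q => .pair (tgtRd X P) (tgtRd X Q)
  | .fst P => .fst (tgtRd X P)
  | .snd P => .snd (tgtRd X P)
  | .lam A P => .lam A (tgtRd X P)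
  | .app P Q => .app (tgtRd X P) (tgtRd X Q)
  | .const c a => .const c (fun i => tgtRd X (a i))
  | .rule r a => (X.rhs r).sub (fun i => tgtRd X (a i))
  | .vcomp _ _ Q => tgtRd X Q

/-- The multiplication `μ_X : L (L X) → L X` on reductions: a rule
application `R⟨P₁,…,Pₙ⟩` is interpreted as the substitution `R[μP₁,…,μPₙ]`,
and `μ` commutes with all the other constructors. -/
def mu (X : Sig2 S) : Rd X.sig (LRule X) → Rd X.sig X.Rule
  | .var n => .var n
  | .unit => .unit
  | .pair P Q => .pair (mu X P) (mu X Q)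
  | .fst P => .fst (mu X P)
  | .snd P => .snd (mu X P)
  | .lam A P => .lam A (mu X P)
  | .app P Q => .app (mu X P) (mu X Q)
  | .const c a => .const c (fun i => mu X (a i))
  | .rule Rr a => rdSub Rr.red (fun i => srcRd X (mu X (a i))) Rr.tgt (fun i => mu X (a i))
  | .vcomp P M Q => .vcomp (mu X P) M (mu X Q)

/-- The unit `η` on reductions: `r ↦ r⟨x₁,…,xₙ⟩`. -/
def etaRd (X : Sig2 S) (r : X.Rule) : Rd X.sig X.Rule :=
  .rule r (fun i => .var i)

/-- The unit `η_X : X → L X` on rules. -/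
def etaRule (X : Sig2 S) (r : X.Rule) : LRule X :=
  ⟨X.ruleCtx r, etaRd X r, X.lhs r, X.rhs r, X.ruleTy r⟩

/-- The rule component of `μ_X : L (L X) → L X`. -/
def muRule (X : Sig2 S) (R₀ : LRule (LSig X)) : LRule X :=
  ⟨R₀.ctx, mu X R₀.red, R₀.src, R₀.tgt, R₀.ty⟩

namespace Tm

variable {Sg : Sig1 S}

theorem liftRen_comp (f g : ℕ → ℕ) :
    (fun n => liftRen g (liftRen f n)) = liftRen (fun n => g (f n)) := by
  funext n; cases n <;> rfl

theorem liftRen_succ (f : ℕ → ℕ) :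
    (fun n => liftRen f (Nat.succ n)) = (fun n => Nat.succ (f n)) := by
  funext n; rfl

theorem ren_ren : ∀ (M : Tm Sg) (f g : ℕ → ℕ), (M.ren f).ren g = M.ren (fun n => g (f n))
  | .var _, _, _ => rfl
  | .unit, _, _ => rfl
  | .pair M N, f, g => by simp [ren, ren_ren M, ren_ren N]
  | .fst M, f, g => by simp [ren, ren_ren M]
  | .snd M, f, g => by simp [ren, ren_ren M]
  | .lam A M, f, g => by simp [ren, ren_ren M, liftRen_comp]
  | .app M N, f, g => by simp [ren, ren_ren M, ren_ren N]
  | .const c a, f, g => by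
      simp only [ren]; congr 1; funext i; exact ren_ren (a i) f g

theorem liftSub_liftRen (σ : ℕ → Tm Sg) (f : ℕ → ℕ) :
    (fun n => liftSub σ (liftRen f n)) = liftSub (fun n => σ (f n)) := by
  funext n; cases n <;> rfl

theorem sub_ren : ∀ (M : Tm Sg) (f : ℕ → ℕ) (σ : ℕ → Tm Sg),
    (M.ren f).sub σ = M.sub (fun n => σ (f n))
  | .var _, _, _ => rfl
  | .unit, _, _ => rfl
  | .pair M N, f, σ => by simp [ren, sub, sub_ren M, sub_ren N]
  | .fst M, f, σ => by simp [ren, sub, sub_ren M]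
  | .snd M, f, σ => by simp [ren, sub, sub_ren M]
  | .lam A M, f, σ => by simp [ren, sub, sub_ren M, liftSub_liftRen]
  | .app M N, f, σ => by simp [ren, sub, sub_ren M, sub_ren N]
  | .const c a, f, σ => by
      simp only [ren, sub]; congr 1; funext i; exact sub_ren (a i) f σ

theorem ren_liftSub (σ : ℕ → Tm Sg) (f : ℕ → ℕ) :
    (fun n => (liftSub σ n).ren (liftRen f)) = liftSub (fun n => (σ n).ren f) := by
  funext n
  cases n with
  | zero => rfl
  | succ n =>
      show ((σ n).ren Nat.succ).ren (liftRen f) = ((σ n).ren f).ren Nat.succ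
      rw [ren_ren, ren_ren]
      congr 1

theorem ren_sub : ∀ (M : Tm Sg) (σ : ℕ → Tm Sg) (f : ℕ → ℕ),
    (M.sub σ).ren f = M.sub (fun n => (σ n).ren f)
  | .var _, _, _ => rfl
  | .unit, _, _ => rfl
  | .pair M N, σ, f => by simp [ren, sub, ren_sub M, ren_sub N]
  | .fst M, σ, f => by simp [ren, sub, ren_sub M]
  | .snd M, σ, f => by simp [ren, sub, ren_sub M]
  | .lam A M, σ, f => by simp [ren, sub, ren_sub M, ren_liftSub]
  | .app M N, σ, f => by simp [ren, sub, ren_sub M, ren_sub N]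
  | .const c a, σ, f => by
      simp only [ren, sub]; congr 1; funext i; exact ren_sub (a i) σ f

theorem liftSub_var : (liftSub (fun n => (Tm.var n : Tm Sg))) = (fun n => (Tm.var n : Tm Sg)) := by
  funext n; cases n <;> rfl

theorem sub_var : ∀ (M : Tm Sg), M.sub (fun n => Tm.var n) = M
  | .var _ => rfl
  | .unit => rfl
  | .pair M N => by simp [sub, sub_var M, sub_var N]
  | .fst M => by simp [sub, sub_var M]
  | .snd M => by simp [sub, sub_var M]
  | .lam A M => by simp [sub, liftSub_var, sub_var M]
  | .app M N => by simp [sub, sub_var M, sub_var N]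
  | .const c a => by
      simp only [sub]; congr 1; funext i; exact sub_var (a i)

end Tm
namespace Rd

variable {Sg : Sig1 S} {R : Type}

theorem ren_ren : ∀ (P : Rd Sg R) (f g : ℕ → ℕ), (P.ren f).ren g = P.ren (fun n => g (f n))
  | .var _, _, _ => rfl
  | .unit, _, _ => rfl
  | .pair P Q, f, g => by simp [ren, ren_ren P, ren_ren Q]
  | .fst P, f, g => by simp [ren, ren_ren P]
  | .snd P, f, g => by simp [ren, ren_ren P]
  | .lam A P, f, g => by simp [ren, ren_ren P, Tm.liftRen_comp]
  | .app P Q, f, g => by simp [ren, ren_ren P, ren_ren Q]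
  | .const c a, f, g => by
      simp only [ren]; congr 1; funext i; exact ren_ren (a i) f g
  | .rule r a, f, g => by
      simp only [ren]; congr 1; funext i; exact ren_ren (a i) f g
  | .vcomp P M Q, f, g => by simp [ren, ren_ren P, ren_ren Q, Tm.ren_ren]

theorem toRd_ren : ∀ (M : Tm Sg) (f : ℕ → ℕ), (toRd M : Rd Sg R).ren f = toRd (M.ren f)
  | .var _, _ => rfl
  | .unit, _ => rfl
  | .pair M N, f => by simp [toRd, ren, Tm.ren, toRd_ren M, toRd_ren N]
  | .fst M, f => by simp [toRd, ren, Tm.ren, toRd_ren M]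
  | .snd M, f => by simp [toRd, ren, Tm.ren, toRd_ren M]
  | .lam A M, f => by simp [toRd, ren, Tm.ren, toRd_ren M]
  | .app M N, f => by simp [toRd, ren, Tm.ren, toRd_ren M, toRd_ren N]
  | .const c a, f => by
      simp only [toRd, ren, Tm.ren]; congr 1; funext i; exact toRd_ren (a i) f

theorem liftRd_liftRen (Q : ℕ → Rd Sg R) (f : ℕ → ℕ) :
    (fun n => liftRd Q (Tm.liftRen f n)) = liftRd (fun n => Q (f n)) := by
  funext n; cases n <;> rfl

theorem ren_liftRd (Q : ℕ → Rd Sg R) (f : ℕ → ℕ) :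
    (fun n => (liftRd Q n).ren (Tm.liftRen f)) = liftRd (fun n => (Q n).ren f) := by
  funext n
  cases n with
  | zero => rfl
  | succ n =>
      show ((Q n).ren Nat.succ).ren (Tm.liftRen f) = ((Q n).ren f).ren Nat.succ
      rw [ren_ren, ren_ren]; congr 1

end Rd

section Whisker

variable {Sg : Sig1 S} {R : Type}

theorem rw_ren : ∀ (P : Rd Sg R) (f : ℕ → ℕ) (σ : ℕ → Tm Sg),
    rw σ (P.ren f) = rw (fun n => σ (f n)) P
  | .var _, _, _ => rfl
  | .unit, _, _ => rfl
  | .pair P Q, f, σ => by simp [Rd.ren, rw, rw_ren P, rw_ren Q]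
  | .fst P, f, σ => by simp [Rd.ren, rw, rw_ren P]
  | .snd P, f, σ => by simp [Rd.ren, rw, rw_ren P]
  | .lam A P, f, σ => by simp [Rd.ren, rw, rw_ren P, Tm.liftSub_liftRen]
  | .app P Q, f, σ => by simp [Rd.ren, rw, rw_ren P, rw_ren Q]
  | .const c a, f, σ => by
      simp only [Rd.ren, rw]; congr 1; funext i; exact rw_ren (a i) f σ
  | .rule r a, f, σ => by
      simp only [Rd.ren, rw]; congr 1; funext i; exact rw_ren (a i) f σ
  | .vcomp P M Q, f, σ => by simp [Rd.ren, rw, rw_ren P, rw_ren Q, Tm.sub_ren]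

theorem ren_rw : ∀ (P : Rd Sg R) (σ : ℕ → Tm Sg) (f : ℕ → ℕ),
    (rw σ P).ren f = rw (fun n => (σ n).ren f) P
  | .var n, _, _ => Rd.toRd_ren _ _
  | .unit, _, _ => rfl
  | .pair P Q, σ, f => by simp [Rd.ren, rw, ren_rw P, ren_rw Q]
  | .fst P, σ, f => by simp [Rd.ren, rw, ren_rw P]
  | .snd P, σ, f => by simp [Rd.ren, rw, ren_rw P]
  | .lam A P, σ, f => by simp [Rd.ren, rw, ren_rw P, Tm.ren_liftSub]
  | .app P Q, σ, f => by simp [Rd.ren, rw, ren_rw P, ren_rw Q]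
  | .const c a, σ, f => by
      simp only [Rd.ren, rw]; congr 1; funext i; exact ren_rw (a i) σ f
  | .rule r a, σ, f => by
      simp only [Rd.ren, rw]; congr 1; funext i; exact ren_rw (a i) σ f
  | .vcomp P M Q, σ, f => by simp [Rd.ren, rw, ren_rw P, ren_rw Q, Tm.ren_sub]

theorem lw_ren : ∀ (M : Tm Sg) (f : ℕ → ℕ) (Q : ℕ → Rd Sg R),
    lw Q (M.ren f) = lw (fun n => Q (f n)) M
  | .var _, _, _ => rfl
  | .unit, _, _ => rfl
  | .pair M N, f, Q => by simp [Tm.ren, lw, lw_ren M, lw_ren N]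
  | .fst M, f, Q => by simp [Tm.ren, lw, lw_ren M]
  | .snd M, f, Q => by simp [Tm.ren, lw, lw_ren M]
  | .lam A M, f, Q => by simp [Tm.ren, lw, lw_ren M, Rd.liftRd_liftRen]
  | .app M N, f, Q => by simp [Tm.ren, lw, lw_ren M, lw_ren N]
  | .const c a, f, Q => by
      simp only [Tm.ren, lw]; congr 1; funext i; exact lw_ren (a i) f Q

theorem ren_lw : ∀ (M : Tm Sg) (Q : ℕ → Rd Sg R) (f : ℕ → ℕ),
    (lw Q M).ren f = lw (fun n => (Q n).ren f) M
  | .var _, _, _ => rfl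
  | .unit, _, _ => rfl
  | .pair M N, Q, f => by simp [lw, Rd.ren, ren_lw M, ren_lw N]
  | .fst M, Q, f => by simp [lw, Rd.ren, ren_lw M]
  | .snd M, Q, f => by simp [lw, Rd.ren, ren_lw M]
  | .lam A M, Q, f => by simp [lw, Rd.ren, ren_lw M, Rd.ren_liftRd]
  | .app M N, Q, f => by simp [lw, Rd.ren, ren_lw M, ren_lw N]
  | .const c a, Q, f => by
      simp only [lw, Rd.ren]; congr 1; funext i; exact ren_lw (a i) Q f

theorem liftRd_var :
    Rd.liftRd (fun n => (Rd.var n : Rd Sg R)) = (fun n => (Rd.var n : Rd Sg R)) := by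
  funext n; cases n <;> rfl

theorem lw_var : ∀ (M : Tm Sg), lw (fun n => (Rd.var n : Rd Sg R)) M = Rd.toRd M
  | .var _ => rfl
  | .unit => rfl
  | .pair M N => by simp [lw, Rd.toRd, lw_var M, lw_var N]
  | .fst M => by simp [lw, Rd.toRd, lw_var M]
  | .snd M => by simp [lw, Rd.toRd, lw_var M]
  | .lam A M => by simp [lw, Rd.toRd, liftRd_var, lw_var M]
  | .app M N => by simp [lw, Rd.toRd, lw_var M, lw_var N]
  | .const c a => by
      simp only [lw, Rd.toRd]; congr 1; funext i; exact lw_var (a i)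

theorem rw_var : ∀ (P : Rd Sg R), rw (fun n => Tm.var n) P = P
  | .var _ => rfl
  | .unit => rfl
  | .pair P Q => by simp [rw, rw_var P, rw_var Q]
  | .fst P => by simp [rw, rw_var P]
  | .snd P => by simp [rw, rw_var P]
  | .lam A P => by simp [rw, Tm.liftSub_var, rw_var P]
  | .app P Q => by simp [rw, rw_var P, rw_var Q]
  | .const c a => by simp only [rw]; congr 1; funext i; exact rw_var (a i)
  | .rule r a => by simp only [rw]; congr 1; funext i; exact rw_var (a i)
  | .vcomp P M Q => by simp [rw, rw_var P, rw_var Q, Tm.sub_var]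

end Whisker
/-- `f` is a typed renaming from `Γ` to `Γ'`. -/
def IsRen (f : ℕ → ℕ) (Γ Γ' : List (Ty S)) : Prop :=
  ∀ n (h : n < Γ.length), ∃ h' : f n < Γ'.length, Γ'.get ⟨f n, h'⟩ = Γ.get ⟨n, h⟩

theorem IsRen.lift {f : ℕ → ℕ} {Γ Γ' : List (Ty S)} (hf : IsRen f Γ Γ') (A : Ty S) :
    IsRen (Tm.liftRen f) (A :: Γ) (A :: Γ') := by
  intro n h
  cases n with
  | zero => exact ⟨Nat.succ_pos _, rfl⟩
  | succ n =>
      obtain ⟨h', e⟩ := hf n (Nat.lt_of_succ_lt_succ h)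
      exact ⟨Nat.succ_lt_succ h', e⟩

theorem IsRen.succ (Γ : List (Ty S)) (A : Ty S) : IsRen Nat.succ Γ (A :: Γ) := by
  intro n h
  exact ⟨Nat.succ_lt_succ h, rfl⟩

theorem HasTy.ren' {Sg : Sig1 S} {Γ : List (Ty S)} {M : Tm Sg} {A : Ty S}
    (hM : HasTy Sg Γ M A) :
    ∀ {Γ' : List (Ty S)} {f : ℕ → ℕ}, IsRen f Γ Γ' → HasTy Sg Γ' (M.ren f) A := by
  induction hM with
  | var h =>
      intro Γ' f hf
      obtain ⟨h', e⟩ := hf _ h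
      exact e ▸ HasTy.var h'
  | unit => intro Γ' f hf; exact HasTy.unit
  | pair _ _ ih1 ih2 => intro Γ' f hf; exact HasTy.pair (ih1 hf) (ih2 hf)
  | fst _ ih => intro Γ' f hf; exact HasTy.fst (ih hf)
  | snd _ ih => intro Γ' f hf; exact HasTy.snd (ih hf)
  | lam _ ih => intro Γ' f hf; exact HasTy.lam (ih (hf.lift _))
  | app _ _ ih1 ih2 => intro Γ' f hf; exact HasTy.app (ih1 hf) (ih2 hf)
  | const h ih => intro Γ' f hf; exact HasTy.const (fun i hi => ih i hi hf)

theorem Beq.ren' {Sg : Sig1 S} {Γ : List (Ty S)} {M N : Tm Sg} {A : Ty S}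
    (hM : Beq Sg Γ M N A) :
    ∀ {Γ' : List (Ty S)} {f : ℕ → ℕ}, IsRen f Γ Γ' → Beq Sg Γ' (M.ren f) (N.ren f) A := by
  induction hM with
  | refl h => intro Γ' f hf; exact Beq.refl (h.ren' hf)
  | symm _ ih => intro Γ' f hf; exact Beq.symm (ih hf)
  | trans _ _ ih1 ih2 => intro Γ' f hf; exact Beq.trans (ih1 hf) (ih2 hf)
  | pairCong _ _ ih1 ih2 => intro Γ' f hf; exact Beq.pairCong (ih1 hf) (ih2 hf)
  | fstCong _ ih => intro Γ' f hf; exact Beq.fstCong (ih hf)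
  | sndCong _ ih => intro Γ' f hf; exact Beq.sndCong (ih hf)
  | lamCong _ ih => intro Γ' f hf; exact Beq.lamCong (ih (hf.lift _))
  | appCong _ _ ih1 ih2 => intro Γ' f hf; exact Beq.appCong (ih1 hf) (ih2 hf)
  | constCong h ih => intro Γ' f hf; exact Beq.constCong (fun i hi => ih i hi hf)
  | @beta Γ M N A B hM hN =>
      intro Γ' f hf
      have e : ((M.sub (Tm.cons N .var)).ren f)
          = (M.ren (Tm.liftRen f)).sub (Tm.cons (N.ren f) .var) := by
        rw [Tm.ren_sub, Tm.sub_ren]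
        congr 1
        funext n
        cases n <;> rfl
      rw [e]
      exact Beq.beta (hM.ren' (hf.lift _)) (hN.ren' hf)
  | @eta Γ M A B hM =>
      intro Γ' f hf
      have e : ((M.ren Nat.succ).ren (Tm.liftRen f)) = (M.ren f).ren Nat.succ := by
        rw [Tm.ren_ren, Tm.ren_ren]; congr 1
      have := Beq.eta (A := A) (hM.ren' hf)
      rw [← e] at this
      exact this
  | prodBeta1 h1 h2 => intro Γ' f hf; exact Beq.prodBeta1 (h1.ren' hf) (h2.ren' hf)
  | prodBeta2 h1 h2 => intro Γ' f hf; exact Beq.prodBeta2 (h1.ren' hf) (h2.ren' hf)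
  | prodEta h => intro Γ' f hf; exact Beq.prodEta (h.ren' hf)
  | unitEta h => intro Γ' f hf; exact Beq.unitEta (h.ren' hf)

theorem RdJ.ren' {X : Sig2 S} {Γ : List (Ty S)} {P : Rd X.sig X.Rule} {M N : Tm X.sig}
    {A : Ty S} (hP : RdJ X Γ P M N A) :
    ∀ {Γ' : List (Ty S)} {f : ℕ → ℕ}, IsRen f Γ Γ' →
      RdJ X Γ' (P.ren f) (M.ren f) (N.ren f) A := by
  induction hP with
  | @rule Γ r args Ms Ns h ih =>
      intro Γ' f hf
      have e1 : ((X.lhs r).sub Ms).ren f = (X.lhs r).sub (fun i => (Ms i).ren f) :=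
        Tm.ren_sub _ _ _
      have e2 : ((X.rhs r).sub Ns).ren f = (X.rhs r).sub (fun i => (Ns i).ren f) :=
        Tm.ren_sub _ _ _
      rw [e1, e2]
      exact RdJ.rule (fun i hi => ih i hi hf)
  | vcomp _ _ ih1 ih2 => intro Γ' f hf; exact RdJ.vcomp (ih1 hf) (ih2 hf)
  | var h =>
      intro Γ' f hf
      obtain ⟨h', e⟩ := hf _ h
      exact e ▸ RdJ.var h'
  | unit => intro Γ' f hf; exact RdJ.unit
  | const h ih => intro Γ' f hf; exact RdJ.const (fun i hi => ih i hi hf)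
  | lam _ ih => intro Γ' f hf; exact RdJ.lam (ih (hf.lift _))
  | app _ _ ih1 ih2 => intro Γ' f hf; exact RdJ.app (ih1 hf) (ih2 hf)
  | pair _ _ ih1 ih2 => intro Γ' f hf; exact RdJ.pair (ih1 hf) (ih2 hf)
  | fst _ ih => intro Γ' f hf; exact RdJ.fst (ih hf)
  | snd _ ih => intro Γ' f hf; exact RdJ.snd (ih hf)
  | conv _ hb1 hb2 ih => intro Γ' f hf; exact RdJ.conv (ih hf) (hb1.ren' hf) (hb2.ren' hf)
theorem PEq.ren' {X : Sig2 S} {Γ : List (Ty S)} {P Q : Rd X.sig X.Rule} {M N : Tm X.sig}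
    {A : Ty S} (hP : PEq X Γ P Q M N A) :
    ∀ {Γ' : List (Ty S)} {f : ℕ → ℕ}, IsRen f Γ Γ' →
      PEq X Γ' (P.ren f) (Q.ren f) (M.ren f) (N.ren f) A := by
  induction hP with
  | refl h => intro Γ' f hf; exact PEq.refl (h.ren' hf)
  | symm _ ih => intro Γ' f hf; exact PEq.symm (ih hf)
  | trans _ _ ih1 ih2 => intro Γ' f hf; exact PEq.trans (ih1 hf) (ih2 hf)
  | vcompCong _ _ ih1 ih2 => intro Γ' f hf; exact PEq.vcompCong (ih1 hf) (ih2 hf)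
  | @ruleCong Γ r P Q Ms Ns h ih =>
      intro Γ' f hf
      rw [Tm.ren_sub, Tm.ren_sub]
      exact PEq.ruleCong (fun i hi => ih i hi hf)
  | constCong h ih => intro Γ' f hf; exact PEq.constCong (fun i hi => ih i hi hf)
  | lamCong _ ih => intro Γ' f hf; exact PEq.lamCong (ih (hf.lift _))
  | appCong _ _ ih1 ih2 => intro Γ' f hf; exact PEq.appCong (ih1 hf) (ih2 hf)
  | pairCong _ _ ih1 ih2 => intro Γ' f hf; exact PEq.pairCong (ih1 hf) (ih2 hf)
  | fstCong _ ih => intro Γ' f hf; exact PEq.fstCong (ih hf)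
  | sndCong _ ih => intro Γ' f hf; exact PEq.sndCong (ih hf)
  | assoc h1 h2 h3 =>
      intro Γ' f hf
      exact PEq.assoc (h1.ren' hf) (h2.ren' hf) (h3.ren' hf)
  | @unitR Γ P M N A h =>
      intro Γ' f hf
      have := PEq.unitR (h.ren' hf)
      rw [← Rd.toRd_ren] at this
      exact this
  | unitL h =>
      intro Γ' f hf
      have := PEq.unitL (h.ren' hf)
      rw [← Rd.toRd_ren] at this
      exact this
  | @beta Γ P Q M M' N N' A B hP hQ =>
      intro Γ' f hf
      have e1 : (rdSub P (Tm.cons N .var) M' (Rd.consRd Q (fun n => Rd.var n))).ren f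
          = rdSub (P.ren (Tm.liftRen f)) (Tm.cons (N.ren f) .var) (M'.ren (Tm.liftRen f))
              (Rd.consRd (Q.ren f) (fun n => Rd.var n)) := by
        show Rd.vcomp _ _ _ = Rd.vcomp _ _ _
        congr 1
        · rw [ren_rw, rw_ren]
          congr 1
          funext n; cases n <;> rfl
        · rw [Tm.ren_sub, Tm.sub_ren]
          congr 1
          funext n; cases n <;> rfl
        · rw [ren_lw, lw_ren]
          congr 1
          funext n; cases n <;> rfl
      have e2 : (M'.sub (Tm.cons N' .var)).ren f
          = (M'.ren (Tm.liftRen f)).sub (Tm.cons (N'.ren f) .var) := by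
        rw [Tm.ren_sub, Tm.sub_ren]
        congr 1
        funext n; cases n <;> rfl
      rw [e1, e2]
      exact PEq.beta (hP.ren' (hf.lift _)) (hQ.ren' hf)
  | @eta Γ P M N A B h =>
      intro Γ' f hf
      have e : ((P.ren Nat.succ).ren (Tm.liftRen f)) = (P.ren f).ren Nat.succ := by
        rw [Rd.ren_ren, Rd.ren_ren]; congr 1
      have := PEq.eta (A := A) (h.ren' hf)
      rw [← e] at this
      exact this
  | fstPair h1 h2 => intro Γ' f hf; exact PEq.fstPair (h1.ren' hf) (h2.ren' hf)
  | sndPair h1 h2 => intro Γ' f hf; exact PEq.sndPair (h1.ren' hf) (h2.ren' hf)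
  | pairEta h => intro Γ' f hf; exact PEq.pairEta (h.ren' hf)
  | unitEta h => intro Γ' f hf; exact PEq.unitEta (h.ren' hf)
  | @ruleLift1 Δ r P Q N₁ N₂ N₃ hP hQ =>
      intro Γ' f hf
      have e : (Rd.vcomp (lw P (X.lhs r)) ((X.lhs r).sub N₂) (.rule r Q)).ren f
          = Rd.vcomp (lw (fun i => (P i).ren f) (X.lhs r))
              ((X.lhs r).sub (fun i => (N₂ i).ren f)) (.rule r (fun i => (Q i).ren f)) := by
        show Rd.vcomp _ _ _ = _
        rw [ren_lw, Tm.ren_sub]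
        rfl
      rw [Tm.ren_sub, Tm.ren_sub, e]
      exact PEq.ruleLift1 (fun i hi => (hP i hi).ren' hf) (fun i hi => (hQ i hi).ren' hf)
  | @ruleLift2 Δ r P Q N₁ N₂ N₃ hP hQ =>
      intro Γ' f hf
      have e : (Rd.vcomp (.rule r P) ((X.rhs r).sub N₂) (lw Q (X.rhs r))).ren f
          = Rd.vcomp (.rule r (fun i => (P i).ren f))
              ((X.rhs r).sub (fun i => (N₂ i).ren f)) (lw (fun i => (Q i).ren f) (X.rhs r)) := by
        show Rd.vcomp _ _ _ = _
        rw [ren_lw, Tm.ren_sub]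
        rfl
      rw [Tm.ren_sub, Tm.ren_sub, e]
      exact PEq.ruleLift2 (fun i hi => (hP i hi).ren' hf) (fun i hi => (hQ i hi).ren' hf)
  | constLift hP hQ =>
      intro Γ' f hf
      exact PEq.constLift (fun i hi => (hP i hi).ren' hf) (fun i hi => (hQ i hi).ren' hf)
  | lamLift hP hQ =>
      intro Γ' f hf
      exact PEq.lamLift (hP.ren' (hf.lift _)) (hQ.ren' (hf.lift _))
  | appLift h1 h2 h3 h4 =>
      intro Γ' f hf
      exact PEq.appLift (h1.ren' hf) (h2.ren' hf) (h3.ren' hf) (h4.ren' hf)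
  | pairLift h1 h2 h3 h4 =>
      intro Γ' f hf
      exact PEq.pairLift (h1.ren' hf) (h2.ren' hf) (h3.ren' hf) (h4.ren' hf)
  | fstLift h1 h2 => intro Γ' f hf; exact PEq.fstLift (h1.ren' hf) (h2.ren' hf)
  | sndLift h1 h2 => intro Γ' f hf; exact PEq.sndLift (h1.ren' hf) (h2.ren' hf)
  | conv _ hb1 hb2 ih => intro Γ' f hf; exact PEq.conv (ih hf) (hb1.ren' hf) (hb2.ren' hf)
theorem RdJ_toRd {X : Sig2 S} {Γ : List (Ty S)} {M : Tm X.sig} {A : Ty S}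
    (hM : HasTy X.sig Γ M A) : RdJ X Γ (Rd.toRd M) M M A := by
  induction hM with
  | var h => exact RdJ.var h
  | unit => exact RdJ.unit
  | pair _ _ ih1 ih2 => exact RdJ.pair ih1 ih2
  | fst _ ih => exact RdJ.fst ih
  | snd _ ih => exact RdJ.snd ih
  | lam _ ih => exact RdJ.lam ih
  | app _ _ ih1 ih2 => exact RdJ.app ih1 ih2
  | const h ih => exact RdJ.const ih

theorem RdJ_lw {X : Sig2 S} {Δ : List (Ty S)} {M : Tm X.sig} {A : Ty S}
    (hM : HasTy X.sig Δ M A) :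
    ∀ {Γ : List (Ty S)} {Q : ℕ → Rd X.sig X.Rule} {Ms Ns : ℕ → Tm X.sig},
      (∀ n (hn : n < Δ.length), RdJ X Γ (Q n) (Ms n) (Ns n) (Δ.get ⟨n, hn⟩)) →
      RdJ X Γ (lw Q M) (M.sub Ms) (M.sub Ns) A := by
  induction hM with
  | var h => intro Γ Q Ms Ns hQ; exact hQ _ h
  | unit => intro Γ Q Ms Ns hQ; exact RdJ.unit
  | pair _ _ ih1 ih2 => intro Γ Q Ms Ns hQ; exact RdJ.pair (ih1 hQ) (ih2 hQ)
  | fst _ ih => intro Γ Q Ms Ns hQ; exact RdJ.fst (ih hQ)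
  | snd _ ih => intro Γ Q Ms Ns hQ; exact RdJ.snd (ih hQ)
  | @lam Δ M A B _ ih =>
      intro Γ Q Ms Ns hQ
      apply RdJ.lam
      apply ih
      intro n hn
      cases n with
      | zero => exact RdJ.var (by simp)
      | succ n => exact (hQ n (Nat.lt_of_succ_lt_succ hn)).ren' (IsRen.succ Γ A)
  | app _ _ ih1 ih2 => intro Γ Q Ms Ns hQ; exact RdJ.app (ih1 hQ) (ih2 hQ)
  | const h ih => intro Γ Q Ms Ns hQ; exact RdJ.const (fun i hi => ih i hi hQ)

/-- Functoriality of left whiskering, in congruence form: if each `PQ n` is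
permutation-equivalent to the vertical composite of `P n` and `Q n`, then
`M[PQ]` is permutation-equivalent to `M[P] ; M[Q]`. -/
theorem lw_lemma {X : Sig2 S} {Δ : List (Ty S)} {M : Tm X.sig} {A : Ty S}
    (hM : HasTy X.sig Δ M A) :
    ∀ {Γ : List (Ty S)} {PQ P Q : ℕ → Rd X.sig X.Rule} {N₁ N₂ N₃ : ℕ → Tm X.sig},
      (∀ n (hn : n < Δ.length),
        PEq X Γ (PQ n) (.vcomp (P n) (N₂ n) (Q n)) (N₁ n) (N₃ n) (Δ.get ⟨n, hn⟩)) →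
      (∀ n (hn : n < Δ.length), RdJ X Γ (P n) (N₁ n) (N₂ n) (Δ.get ⟨n, hn⟩)) →
      (∀ n (hn : n < Δ.length), RdJ X Γ (Q n) (N₂ n) (N₃ n) (Δ.get ⟨n, hn⟩)) →
      PEq X Γ (lw PQ M) (.vcomp (lw P M) (M.sub N₂) (lw Q M)) (M.sub N₁) (M.sub N₃) A := by
  induction hM with
  | var h => intro Γ PQ P Q N₁ N₂ N₃ hPQ hP hQ; exact hPQ _ h
  | unit =>
      intro Γ PQ P Q N₁ N₂ N₃ hPQ hP hQ
      exact PEq.symm (PEq.unitL RdJ.unit)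
  | pair _ _ ih1 ih2 =>
      intro Γ PQ P Q N₁ N₂ N₃ hPQ hP hQ
      exact PEq.trans (PEq.pairCong (ih1 hPQ hP hQ) (ih2 hPQ hP hQ))
        (PEq.pairLift (RdJ_lw ‹_› hP) (RdJ_lw ‹_› hQ) (RdJ_lw ‹_› hP) (RdJ_lw ‹_› hQ))
  | fst _ ih =>
      intro Γ PQ P Q N₁ N₂ N₃ hPQ hP hQ
      exact PEq.trans (PEq.fstCong (ih hPQ hP hQ))
        (PEq.fstLift (RdJ_lw ‹_› hP) (RdJ_lw ‹_› hQ))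
  | snd _ ih =>
      intro Γ PQ P Q N₁ N₂ N₃ hPQ hP hQ
      exact PEq.trans (PEq.sndCong (ih hPQ hP hQ))
        (PEq.sndLift (RdJ_lw ‹_› hP) (RdJ_lw ‹_› hQ))
  | app _ _ ih1 ih2 =>
      intro Γ PQ P Q N₁ N₂ N₃ hPQ hP hQ
      exact PEq.trans (PEq.appCong (ih1 hPQ hP hQ) (ih2 hPQ hP hQ))
        (PEq.appLift (RdJ_lw ‹_› hP) (RdJ_lw ‹_› hQ) (RdJ_lw ‹_› hP) (RdJ_lw ‹_› hQ))
  | @lam Δ M A B hMty ih =>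
      intro Γ PQ P Q N₁ N₂ N₃ hPQ hP hQ
      have hP' : ∀ n (hn : n < (A :: Δ).length),
          RdJ X (A :: Γ) (Rd.liftRd P n) (Tm.liftSub N₁ n) (Tm.liftSub N₂ n)
            ((A :: Δ).get ⟨n, hn⟩) := by
        intro n hn
        cases n with
        | zero => exact RdJ.var (by simp)
        | succ n => exact (hP n (Nat.lt_of_succ_lt_succ hn)).ren' (IsRen.succ Γ A)
      have hQ' : ∀ n (hn : n < (A :: Δ).length),
          RdJ X (A :: Γ) (Rd.liftRd Q n) (Tm.liftSub N₂ n) (Tm.liftSub N₃ n)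
            ((A :: Δ).get ⟨n, hn⟩) := by
        intro n hn
        cases n with
        | zero => exact RdJ.var (by simp)
        | succ n => exact (hQ n (Nat.lt_of_succ_lt_succ hn)).ren' (IsRen.succ Γ A)
      have hPQ' : ∀ n (hn : n < (A :: Δ).length),
          PEq X (A :: Γ) (Rd.liftRd PQ n)
            (.vcomp (Rd.liftRd P n) (Tm.liftSub N₂ n) (Rd.liftRd Q n))
            (Tm.liftSub N₁ n) (Tm.liftSub N₃ n) ((A :: Δ).get ⟨n, hn⟩) := by
        intro n hn
        cases n with
        | zero => exact PEq.symm (PEq.unitL (RdJ.var (by simp)))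
        | succ n => exact (hPQ n (Nat.lt_of_succ_lt_succ hn)).ren' (IsRen.succ Γ A)
      exact PEq.trans (PEq.lamCong (ih hPQ' hP' hQ'))
        (PEq.lamLift (RdJ_lw hMty hP') (RdJ_lw hMty hQ'))
  | const h ih =>
      intro Γ PQ P Q N₁ N₂ N₃ hPQ hP hQ
      exact PEq.trans (PEq.constCong (fun i hi => ih i hi hPQ hP hQ))
        (PEq.constLift (fun i hi => RdJ_lw (h i hi) hP) (fun i hi => RdJ_lw (h i hi) hQ))
section RuleHelpers

variable {X : Sig2 S}

theorem ctx_get_eq {r : X.Rule} {D : Ty S} (hc : X.ruleCtx r = [D]) :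
    ∀ i (hi : i < (X.ruleCtx r).length), (X.ruleCtx r).get ⟨i, hi⟩ = D := by
  rw [hc]
  intro i hi
  have : i = 0 := Nat.lt_one_iff.mp (by simpa using hi)
  subst this
  rfl

/-- Applying a unary rule to a single reduction. -/
theorem RdJ_rule1 {r : X.Rule} {D : Ty S} (hc : X.ruleCtx r = [D])
    {Γ : List (Ty S)} {P : Rd X.sig X.Rule} {Ma Mb : Tm X.sig}
    (hP : RdJ X Γ P Ma Mb D) :
    RdJ X Γ (.rule r (fun _ => P)) ((X.lhs r).sub (fun _ => Ma))
      ((X.rhs r).sub (fun _ => Mb)) (X.ruleTy r) :=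
  RdJ.rule (fun i hi => (ctx_get_eq hc i hi) ▸ hP)

/-- Whisker-first decomposition of a unary rule application:
`r⟨P⟩ ≡ (lhs r)[P] ; r[Mb]`. -/
theorem rule_decomp1 {r : X.Rule} {D : Ty S} (hc : X.ruleCtx r = [D])
    {Γ : List (Ty S)} {P : Rd X.sig X.Rule} {Ma Mb : Tm X.sig}
    (hMb : HasTy X.sig Γ Mb D) (hP : RdJ X Γ P Ma Mb D) :
    PEq X Γ (.rule r (fun _ => P))
      (.vcomp (lw (fun _ => P) (X.lhs r)) ((X.lhs r).sub (fun _ => Mb))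
        (.rule r (fun _ => Rd.toRd Mb)))
      ((X.lhs r).sub (fun _ => Ma)) ((X.rhs r).sub (fun _ => Mb)) (X.ruleTy r) := by
  refine PEq.trans ?_ (PEq.ruleLift1 (P := fun _ => P) (Q := fun _ => Rd.toRd Mb)
    (N₁ := fun _ => Ma) (N₂ := fun _ => Mb) (N₃ := fun _ => Mb)
    (fun i hi => (ctx_get_eq hc i hi) ▸ hP)
    (fun i hi => (ctx_get_eq hc i hi) ▸ RdJ_toRd hMb))
  exact PEq.ruleCong (fun i hi => (ctx_get_eq hc i hi) ▸ PEq.symm (PEq.unitR hP))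

/-- Rule-first decomposition of a unary rule application:
`r⟨P⟩ ≡ r[Ma] ; (rhs r)[P]`. -/
theorem rule_decomp2 {r : X.Rule} {D : Ty S} (hc : X.ruleCtx r = [D])
    {Γ : List (Ty S)} {P : Rd X.sig X.Rule} {Ma Mb : Tm X.sig}
    (hMa : HasTy X.sig Γ Ma D) (hP : RdJ X Γ P Ma Mb D) :
    PEq X Γ (.rule r (fun _ => P))
      (.vcomp (.rule r (fun _ => Rd.toRd Ma)) ((X.rhs r).sub (fun _ => Ma))
        (lw (fun _ => P) (X.rhs r)))
      ((X.lhs r).sub (fun _ => Ma)) ((X.rhs r).sub (fun _ => Mb)) (X.ruleTy r) := by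
  refine PEq.trans ?_ (PEq.ruleLift2 (P := fun _ => Rd.toRd Ma) (Q := fun _ => P)
    (N₁ := fun _ => Ma) (N₂ := fun _ => Ma) (N₃ := fun _ => Mb)
    (fun i hi => (ctx_get_eq hc i hi) ▸ RdJ_toRd hMa)
    (fun i hi => (ctx_get_eq hc i hi) ▸ hP))
  exact PEq.ruleCong (fun i hi => (ctx_get_eq hc i hi) ▸ PEq.symm (PEq.unitL hP))

/-- Naturality of a unary rule with respect to a reduction `P : Ma ⟶ Mb`:
`r[Ma] ; (rhs r)[P] ≡ (lhs r)[P] ; r[Mb]`. -/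
theorem rule_nat {r : X.Rule} {D : Ty S} (hc : X.ruleCtx r = [D])
    {Γ : List (Ty S)} {P : Rd X.sig X.Rule} {Ma Mb : Tm X.sig}
    (hMa : HasTy X.sig Γ Ma D) (hMb : HasTy X.sig Γ Mb D) (hP : RdJ X Γ P Ma Mb D) :
    PEq X Γ
      (.vcomp (.rule r (fun _ => Rd.toRd Ma)) ((X.rhs r).sub (fun _ => Ma))
        (lw (fun _ => P) (X.rhs r)))
      (.vcomp (lw (fun _ => P) (X.lhs r)) ((X.lhs r).sub (fun _ => Mb))
        (.rule r (fun _ => Rd.toRd Mb)))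
      ((X.lhs r).sub (fun _ => Ma)) ((X.rhs r).sub (fun _ => Mb)) (X.ruleTy r) :=
  PEq.trans (PEq.symm (rule_decomp2 hc hMa hP)) (rule_decomp1 hc hMb hP)

end RuleHelpers
theorem interchange_core {X : Sig2 S}
    (hwt : ∀ r : X.Rule, HasTy X.sig (X.ruleCtx r) (X.lhs r) (X.ruleTy r) ∧
      HasTy X.sig (X.ruleCtx r) (X.rhs r) (X.ruleTy r))
    {A B C : Ty S} (α β : X.Rule) (M₁ M₂ M₃ : Tm X.sig)
    (hαc : X.ruleCtx α = [A]) (hαt : X.ruleTy α = B)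
    (hαl : X.lhs α = M₁) (hαr : X.rhs α = M₂)
    (hβc : X.ruleCtx β = [A]) (hβt : X.ruleTy β = B)
    (hβl : X.lhs β = M₂) (hβr : X.rhs β = M₃)
    (γ θ : X.Rule) (N₁ N₂ N₃ : Tm X.sig)
    (hγc : X.ruleCtx γ = [B]) (hγt : X.ruleTy γ = C)
    (hγl : X.lhs γ = N₁) (hγr : X.rhs γ = N₂)
    (hθc : X.ruleCtx θ = [B]) (hθt : X.ruleTy θ = C)
    (hθl : X.lhs θ = N₂) (hθr : X.rhs θ = N₃) :
    PEq X [A]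
      (.vcomp
        (.vcomp (.rule γ (fun _ => Rd.toRd M₁)) (N₂.sub (fun _ => M₁))
          (.rule θ (fun _ => Rd.toRd M₁)))
        (N₃.sub (fun _ => M₁))
        (lw (fun _ => Rd.vcomp (Rd.vcomp (etaRd X α) M₂ (etaRd X β)) M₃ (Rd.toRd M₃)) N₃))
      (.vcomp
        (.vcomp (.rule γ (fun _ => etaRd X α)) (N₂.sub (fun _ => M₂))
          (Rd.toRd (N₂.sub (fun _ => M₂))))
        (N₂.sub (fun _ => M₂))
        (.vcomp (.rule θ (fun _ => etaRd X β)) (N₃.sub (fun _ => M₃))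
          (Rd.toRd (N₃.sub (fun _ => M₃)))))
      (N₁.sub (fun _ => M₁)) (N₃.sub (fun _ => M₃)) C := by
  -- typing facts
  have tM₁ : HasTy X.sig [A] M₁ B := by
    have t := (hwt α).1; rwa [hαc, hαl, hαt] at t
  have tM₂ : HasTy X.sig [A] M₂ B := by
    have t := (hwt α).2; rwa [hαc, hαr, hαt] at t
  have tM₃ : HasTy X.sig [A] M₃ B := by
    have t := (hwt β).2; rwa [hβc, hβr, hβt] at t
  have tN₂ : HasTy X.sig [B] N₂ C := by
    have t := (hwt θ).1; rwa [hθc, hθl, hθt] at t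
  have tN₃ : HasTy X.sig [B] N₃ C := by
    have t := (hwt θ).2; rwa [hθc, hθr, hθt] at t
  -- η-expanded rules as reductions
  have jα : RdJ X [A] (etaRd X α) M₁ M₂ B := by
    have j := RdJ.rule (X := X) (Γ := [A]) (r := α) (args := fun i => .var i)
      (Ms := fun i => .var i) (Ns := fun i => .var i) ?_
    · rw [Tm.sub_var, Tm.sub_var, hαl, hαr, hαt] at j
      exact j
    · intro i hi
      rw [ctx_get_eq hαc i hi]
      have hi1 : i < 1 := by rw [hαc] at hi; simpa using hi
      have hi0 : i = 0 := Nat.lt_one_iff.mp hi1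
      subst hi0
      exact RdJ.var (by simp)
  have jβ : RdJ X [A] (etaRd X β) M₂ M₃ B := by
    have j := RdJ.rule (X := X) (Γ := [A]) (r := β) (args := fun i => .var i)
      (Ms := fun i => .var i) (Ns := fun i => .var i) ?_
    · rw [Tm.sub_var, Tm.sub_var, hβl, hβr, hβt] at j
      exact j
    · intro i hi
      rw [ctx_get_eq hβc i hi]
      have hi1 : i < 1 := by rw [hβc] at hi; simpa using hi
      have hi0 : i = 0 := Nat.lt_one_iff.mp hi1
      subst hi0
      exact RdJ.var (by simp)
  have jvα : RdJ X [A] (.vcomp (etaRd X α) M₂ (etaRd X β)) M₁ M₃ B := RdJ.vcomp jα jβ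
  -- whiskered rules
  have jγM₁ : RdJ X [A] (.rule γ (fun _ => Rd.toRd M₁)) (N₁.sub (fun _ => M₁))
      (N₂.sub (fun _ => M₁)) C := by
    have j := RdJ_rule1 hγc (RdJ_toRd tM₁); rwa [hγl, hγr, hγt] at j
  have jθM₁ : RdJ X [A] (.rule θ (fun _ => Rd.toRd M₁)) (N₂.sub (fun _ => M₁))
      (N₃.sub (fun _ => M₁)) C := by
    have j := RdJ_rule1 hθc (RdJ_toRd tM₁); rwa [hθl, hθr, hθt] at j
  have jθM₂ : RdJ X [A] (.rule θ (fun _ => Rd.toRd M₂)) (N₂.sub (fun _ => M₂))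
      (N₃.sub (fun _ => M₂)) C := by
    have j := RdJ_rule1 hθc (RdJ_toRd tM₂); rwa [hθl, hθr, hθt] at j
  have jθM₃ : RdJ X [A] (.rule θ (fun _ => Rd.toRd M₃)) (N₂.sub (fun _ => M₃))
      (N₃.sub (fun _ => M₃)) C := by
    have j := RdJ_rule1 hθc (RdJ_toRd tM₃); rwa [hθl, hθr, hθt] at j
  have jGγα : RdJ X [A] (.rule γ (fun _ => etaRd X α)) (N₁.sub (fun _ => M₁))
      (N₂.sub (fun _ => M₂)) C := by
    have j := RdJ_rule1 hγc jα; rwa [hγl, hγr, hγt] at j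
  have jGθβ : RdJ X [A] (.rule θ (fun _ => etaRd X β)) (N₂.sub (fun _ => M₂))
      (N₃.sub (fun _ => M₃)) C := by
    have j := RdJ_rule1 hθc jβ; rwa [hθl, hθr, hθt] at j
  -- families for whiskering
  have famα : ∀ n (hn : n < ([B] : List (Ty S)).length),
      RdJ X [A] (etaRd X α) M₁ M₂ (([B] : List (Ty S)).get ⟨n, hn⟩) := by
    intro n hn
    have hn0 : n = 0 := Nat.lt_one_iff.mp (by simpa using hn)
    subst hn0
    exact jα
  have famβ : ∀ n (hn : n < ([B] : List (Ty S)).length),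
      RdJ X [A] (etaRd X β) M₂ M₃ (([B] : List (Ty S)).get ⟨n, hn⟩) := by
    intro n hn
    have hn0 : n = 0 := Nat.lt_one_iff.mp (by simpa using hn)
    subst hn0
    exact jβ
  have jb1 : RdJ X [A] (lw (fun _ => etaRd X α) N₃) (N₃.sub (fun _ => M₁))
      (N₃.sub (fun _ => M₂)) C :=
    RdJ_lw tN₃ (Ms := fun _ => M₁) (Ns := fun _ => M₂) famα
  have jb2 : RdJ X [A] (lw (fun _ => etaRd X β) N₃) (N₃.sub (fun _ => M₂))
      (N₃.sub (fun _ => M₃)) C :=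
    RdJ_lw tN₃ (Ms := fun _ => M₂) (Ns := fun _ => M₃) famβ
  have jd1 : RdJ X [A] (lw (fun _ => etaRd X α) N₂) (N₂.sub (fun _ => M₁))
      (N₂.sub (fun _ => M₂)) C :=
    RdJ_lw tN₂ (Ms := fun _ => M₁) (Ns := fun _ => M₂) famα
  have jd2 : RdJ X [A] (lw (fun _ => etaRd X β) N₂) (N₂.sub (fun _ => M₂))
      (N₂.sub (fun _ => M₃)) C :=
    RdJ_lw tN₂ (Ms := fun _ => M₂) (Ns := fun _ => M₃) famβ
  -- functoriality of left whiskering applied to the composite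
  have s1b : PEq X [A]
      (lw (fun _ => Rd.vcomp (Rd.vcomp (etaRd X α) M₂ (etaRd X β)) M₃ (Rd.toRd M₃)) N₃)
      (.vcomp (lw (fun _ => etaRd X α) N₃) (N₃.sub (fun _ => M₂)) (lw (fun _ => etaRd X β) N₃))
      (N₃.sub (fun _ => M₁)) (N₃.sub (fun _ => M₃)) C := by
    refine lw_lemma tN₃ (N₁ := fun _ => M₁) (N₂ := fun _ => M₂) (N₃ := fun _ => M₃)
      ?_ famα famβ
    intro n hn
    have hn0 : n = 0 := Nat.lt_one_iff.mp (by simpa using hn)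
    subst hn0
    exact PEq.unitR jvα
  -- naturality squares
  have hn1 : PEq X [A]
      (.vcomp (.rule θ (fun _ => Rd.toRd M₁)) (N₃.sub (fun _ => M₁))
        (lw (fun _ => etaRd X α) N₃))
      (.vcomp (lw (fun _ => etaRd X α) N₂) (N₂.sub (fun _ => M₂))
        (.rule θ (fun _ => Rd.toRd M₂)))
      (N₂.sub (fun _ => M₁)) (N₃.sub (fun _ => M₂)) C := by
    have j := rule_nat hθc tM₁ tM₂ jα; rwa [hθl, hθr, hθt] at j
  have hn2 : PEq X [A]
      (.vcomp (.rule θ (fun _ => Rd.toRd M₂)) (N₃.sub (fun _ => M₂))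
        (lw (fun _ => etaRd X β) N₃))
      (.vcomp (lw (fun _ => etaRd X β) N₂) (N₂.sub (fun _ => M₃))
        (.rule θ (fun _ => Rd.toRd M₃)))
      (N₂.sub (fun _ => M₂)) (N₃.sub (fun _ => M₃)) C := by
    have j := rule_nat hθc tM₂ tM₃ jβ; rwa [hθl, hθr, hθt] at j
  -- decompositions of the horizontal composites
  have dγ : PEq X [A] (.rule γ (fun _ => etaRd X α))
      (.vcomp (.rule γ (fun _ => Rd.toRd M₁)) (N₂.sub (fun _ => M₁))
        (lw (fun _ => etaRd X α) N₂))
      (N₁.sub (fun _ => M₁)) (N₂.sub (fun _ => M₂)) C := by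
    have j := rule_decomp2 hγc tM₁ jα; rwa [hγl, hγr, hγt] at j
  have dθ : PEq X [A] (.rule θ (fun _ => etaRd X β))
      (.vcomp (lw (fun _ => etaRd X β) N₂) (N₂.sub (fun _ => M₃))
        (.rule θ (fun _ => Rd.toRd M₃)))
      (N₂.sub (fun _ => M₂)) (N₃.sub (fun _ => M₃)) C := by
    have j := rule_decomp1 hθc tM₃ jβ; rwa [hθl, hθr, hθt] at j
  -- the chain
  refine PEq.trans (PEq.vcompCong (PEq.refl (RdJ.vcomp jγM₁ jθM₁)) s1b) ?_
  refine PEq.trans (PEq.symm (PEq.assoc jγM₁ jθM₁ (RdJ.vcomp jb1 jb2))) ?_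
  refine PEq.trans (PEq.vcompCong (PEq.refl jγM₁) (PEq.assoc jθM₁ jb1 jb2)) ?_
  refine PEq.trans (PEq.vcompCong (PEq.refl jγM₁) (PEq.vcompCong hn1 (PEq.refl jb2))) ?_
  refine PEq.trans (PEq.vcompCong (PEq.refl jγM₁) (PEq.symm (PEq.assoc jd1 jθM₂ jb2))) ?_
  refine PEq.trans (PEq.vcompCong (PEq.refl jγM₁) (PEq.vcompCong (PEq.refl jd1) hn2)) ?_
  refine PEq.trans (PEq.assoc jγM₁ jd1 (RdJ.vcomp jd2 jθM₃)) ?_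
  refine PEq.trans (PEq.symm (PEq.vcompCong dγ dθ)) ?_
  exact PEq.symm (PEq.vcompCong (PEq.unitR jGγα) (PEq.unitR jGθβ))
/-- The interchange law holds in `F(X,h)`: for 2-cells
`α : M₁ ⟶ M₂`, `β : M₂ ⟶ M₃ : A → B` and `γ : N₁ ⟶ N₂`,
`θ : N₂ ⟶ N₃ : B → C`,
`(γ ; θ) ∘ (α ; β) = (γ ∘ α) ; (θ ∘ β)`. -/
theorem interchange_law (X : Sig2 S)
    (h : List (Ty S) → Rd X.sig X.Rule → X.Rule)
    -- h respects permutation equivalence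
    (hPEq : ∀ Γ P Q M N A, PEq X Γ P Q M N A → h Γ P = h Γ Q)
    -- the algebra law h ∘ L(h) = h ∘ μ
    (hAlg : ∀ Γ (T : Rd X.sig (LRule X)),
      h Γ (Rd.mapRule (fun R₀ => h R₀.ctx R₀.red) T) = h Γ (mu X T))
    -- the algebra law h ∘ η = id
    (hEta : ∀ r : X.Rule, h (X.ruleCtx r) (etaRd X r) = r)
    -- rules of X are well-typed
    (hwt : ∀ r : X.Rule, HasTy X.sig (X.ruleCtx r) (X.lhs r) (X.ruleTy r) ∧
      HasTy X.sig (X.ruleCtx r) (X.rhs r) (X.ruleTy r))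
    -- 2-cells α : M₁ ⟶ M₂ and β : M₂ ⟶ M₃ : A → B
    {A B C : Ty S} (α β : X.Rule) (M₁ M₂ M₃ : Tm X.sig)
    (hαc : X.ruleCtx α = [A]) (hαt : X.ruleTy α = B)
    (hαl : X.lhs α = M₁) (hαr : X.rhs α = M₂)
    (hβc : X.ruleCtx β = [A]) (hβt : X.ruleTy β = B)
    (hβl : X.lhs β = M₂) (hβr : X.rhs β = M₃)
    -- 2-cells γ : N₁ ⟶ N₂ and θ : N₂ ⟶ N₃ : B → C
    (γ θ : X.Rule) (N₁ N₂ N₃ : Tm X.sig)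
    (hγc : X.ruleCtx γ = [B]) (hγt : X.ruleTy γ = C)
    (hγl : X.lhs γ = N₁) (hγr : X.rhs γ = N₂)
    (hθc : X.ruleCtx θ = [B]) (hθt : X.ruleTy θ = C)
    (hθl : X.lhs θ = N₂) (hθr : X.rhs θ = N₃) :
    h [A] (.rule (h [B] (.vcomp (etaRd X γ) N₂ (etaRd X θ)))
        (fun _ => etaRd X (h [A] (.vcomp (etaRd X α) M₂ (etaRd X β))))) =
      h [A] (.vcomp
        (etaRd X (h [A] (.rule γ (fun _ => etaRd X α))))
        (N₂.sub (fun _ => M₂))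
        (etaRd X (h [A] (.rule θ (fun _ => etaRd X β))))) := by
  have e1 : Rd.mapRule (fun R₀ => h R₀.ctx R₀.red)
      (Rd.rule (⟨[B], .vcomp (etaRd X γ) N₂ (etaRd X θ), N₁, N₃, C⟩ : LRule X)
        (fun _ => Rd.rule (⟨[A], .vcomp (etaRd X α) M₂ (etaRd X β), M₁, M₃, B⟩ : LRule X)
          (fun i => .var i)))
      = Rd.rule (h [B] (.vcomp (etaRd X γ) N₂ (etaRd X θ)))
          (fun _ => etaRd X (h [A] (.vcomp (etaRd X α) M₂ (etaRd X β)))) := rfl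
  have e2 : Rd.mapRule (fun R₀ => h R₀.ctx R₀.red)
      (Rd.vcomp
        (Rd.rule (⟨[A], .rule γ (fun _ => etaRd X α), N₁.sub (fun _ => M₁),
            N₂.sub (fun _ => M₂), C⟩ : LRule X) (fun i => .var i))
        (N₂.sub (fun _ => M₂))
        (Rd.rule (⟨[A], .rule θ (fun _ => etaRd X β), N₂.sub (fun _ => M₂),
            N₃.sub (fun _ => M₃), C⟩ : LRule X) (fun i => .var i)))
      = Rd.vcomp
          (etaRd X (h [A] (.rule γ (fun _ => etaRd X α))))
          (N₂.sub (fun _ => M₂))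
          (etaRd X (h [A] (.rule θ (fun _ => etaRd X β)))) := rfl
  have eT : mu X
      (Rd.rule (⟨[B], .vcomp (etaRd X γ) N₂ (etaRd X θ), N₁, N₃, C⟩ : LRule X)
        (fun _ => Rd.rule (⟨[A], .vcomp (etaRd X α) M₂ (etaRd X β), M₁, M₃, B⟩ : LRule X)
          (fun i => .var i)))
      = Rd.vcomp
          (.vcomp (.rule γ (fun _ => Rd.toRd M₁)) (N₂.sub (fun _ => M₁))
            (.rule θ (fun _ => Rd.toRd M₁)))
          (N₃.sub (fun _ => M₁))
          (lw (fun _ => Rd.vcomp (Rd.vcomp (etaRd X α) M₂ (etaRd X β)) M₃ (Rd.toRd M₃)) N₃) := by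
    simp only [mu, rdSub, srcRd, rw, lw, etaRd, Rd.toRd, rw_var, lw_var, Tm.sub_var, hαl]
  have eT' : mu X
      (Rd.vcomp
        (Rd.rule (⟨[A], .rule γ (fun _ => etaRd X α), N₁.sub (fun _ => M₁),
            N₂.sub (fun _ => M₂), C⟩ : LRule X) (fun i => .var i))
        (N₂.sub (fun _ => M₂))
        (Rd.rule (⟨[A], .rule θ (fun _ => etaRd X β), N₂.sub (fun _ => M₂),
            N₃.sub (fun _ => M₃), C⟩ : LRule X) (fun i => .var i)))
      = Rd.vcomp
          (.vcomp (.rule γ (fun _ => etaRd X α)) (N₂.sub (fun _ => M₂))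
            (Rd.toRd (N₂.sub (fun _ => M₂))))
          (N₂.sub (fun _ => M₂))
          (.vcomp (.rule θ (fun _ => etaRd X β)) (N₃.sub (fun _ => M₃))
            (Rd.toRd (N₃.sub (fun _ => M₃)))) := by
    simp only [mu, rdSub, srcRd, rw, lw, etaRd, Rd.toRd, rw_var, lw_var, Tm.sub_var]
  have core := interchange_core hwt α β M₁ M₂ M₃ hαc hαt hαl hαr hβc hβt hβl hβr
    γ θ N₁ N₂ N₃ hγc hγt hγl hγr hθc hθt hθl hθr
  rw [← eT, ← eT'] at core
  calc h [A] (.rule (h [B] (.vcomp (etaRd X γ) N₂ (etaRd X θ)))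
        (fun _ => etaRd X (h [A] (.vcomp (etaRd X α) M₂ (etaRd X β)))))
      = h [A] (Rd.mapRule (fun R₀ => h R₀.ctx R₀.red)
          (Rd.rule (⟨[B], .vcomp (etaRd X γ) N₂ (etaRd X θ), N₁, N₃, C⟩ : LRule X)
            (fun _ => Rd.rule
              (⟨[A], .vcomp (etaRd X α) M₂ (etaRd X β), M₁, M₃, B⟩ : LRule X)
              (fun i => .var i)))) := by rw [e1]
    _ = h [A] (mu X
          (Rd.rule (⟨[B], .vcomp (etaRd X γ) N₂ (etaRd X θ), N₁, N₃, C⟩ : LRule X)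
            (fun _ => Rd.rule
              (⟨[A], .vcomp (etaRd X α) M₂ (etaRd X β), M₁, M₃, B⟩ : LRule X)
              (fun i => .var i)))) := hAlg [A] _
    _ = h [A] (mu X
          (Rd.vcomp
            (Rd.rule (⟨[A], .rule γ (fun _ => etaRd X α), N₁.sub (fun _ => M₁),
                N₂.sub (fun _ => M₂), C⟩ : LRule X) (fun i => .var i))
            (N₂.sub (fun _ => M₂))
            (Rd.rule (⟨[A], .rule θ (fun _ => etaRd X β), N₂.sub (fun _ => M₂),
                N₃.sub (fun _ => M₃), C⟩ : LRule X) (fun i => .var i)))) :=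
        hPEq _ _ _ _ _ _ core
    _ = h [A] (Rd.mapRule (fun R₀ => h R₀.ctx R₀.red)
          (Rd.vcomp
            (Rd.rule (⟨[A], .rule γ (fun _ => etaRd X α), N₁.sub (fun _ => M₁),
                N₂.sub (fun _ => M₂), C⟩ : LRule X) (fun i => .var i))
            (N₂.sub (fun _ => M₂))
            (Rd.rule (⟨[A], .rule θ (fun _ => etaRd X β), N₂.sub (fun _ => M₂),
                N₃.sub (fun _ => M₃), C⟩ : LRule X) (fun i => .var i)))) :=
        (hAlg [A] _).symm
    _ = h [A] (.vcomp
        (etaRd X (h [A] (.rule γ (fun _ => etaRd X α))))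
        (N₂.sub (fun _ => M₂))
        (etaRd X (h [A] (.rule θ (fun _ => etaRd X β))))) := by rw [e2]
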